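/- arXiv:1905.03141 — 4 statements merged into one kernel-verified Lean document; each statement's English description precedes it below -/
import Mathlib

section
/- For every n ≥ 1, the maximum of ψ(t) = (2√n/(n+1))·√(t(n+1−t)) + |1 − 2t/(n+1)| over t ∈ [0, n+1] equals √(n+1), attained at t₋ = (n+1)/2 − √(n+1)/2 and t₊ = (n+1)/2 + √(n+1)/2. -/
/-!
With `N = n + 1`, the numbers `x = 2√(t(N - t))/N` and `y = |1 - 2t/N|` satisfy `x² + y² = 1`, because
`4t(N - t) + (N - 2t)² = N²`. Hence `ψ(t) = √n·x + y ≤ √(n + 1)` by Cauchy–Schwarz, with equality when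
`(x, y)` is proportional to `(√n, 1)`, i.e. when `(2t - N)² = N`, which is `t = t₋` or `t = t₊`.
-/

open Real

noncomputable def psi (m t : ℝ) : ℝ :=
  2 * √m / (m + 1) * √(t * (m + 1 - t)) + |1 - 2 * t / (m + 1)|

lemma mul_add_mul_le_sqrt_of_sq_add_sq_eq_one {a b x y : ℝ} (h : x ^ 2 + y ^ 2 = 1) :
    a * x + b * y ≤ √(a ^ 2 + b ^ 2) := by
  refine (le_abs_self _).trans (abs_le_sqrt ?_)
  nlinarith [sq_nonneg (a * y - b * x)]

lemma sq_two_sqrt_mul_sub_div_add_sq_one_sub_div {N t : ℝ} (hN : N ≠ 0) (ht : t ∈ Set.Icc 0 N) :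
    (2 * √(t * (N - t)) / N) ^ 2 + |1 - 2 * t / N| ^ 2 = 1 := by
  rw [div_pow, mul_pow, sq_sqrt (mul_nonneg ht.1 (sub_nonneg.2 ht.2)), sq_abs]
  field_simp
  ring

lemma psi_le_sqrt {m t : ℝ} (hm : 0 ≤ m) (ht : t ∈ Set.Icc 0 (m + 1)) : psi m t ≤ √(m + 1) := by
  have hcs := mul_add_mul_le_sqrt_of_sq_add_sq_eq_one (a := √m) (b := 1)
    (sq_two_sqrt_mul_sub_div_add_sq_one_sub_div (by positivity) ht)
  rw [sq_sqrt hm, one_pow] at hcs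
  calc psi m t = √m * (2 * √(t * (m + 1 - t)) / (m + 1)) + 1 * |1 - 2 * t / (m + 1)| := by
        unfold psi; ring
    _ ≤ √(m + 1) := hcs

lemma psi_eq_sqrt_of_sq_eq {m t : ℝ} (hm : 0 ≤ m) (ht : (2 * t - (m + 1)) ^ 2 = m + 1) :
    psi m t = √(m + 1) := by
  have hN : 0 < m + 1 := by linarith
  have hprod : t * (m + 1 - t) = (√(m + 1) * √m / 2) ^ 2 := by
    rw [div_pow, mul_pow, sq_sqrt hN.le, sq_sqrt hm]
    linear_combination -ht / 4
  have habs : |1 - 2 * t / (m + 1)| = √(m + 1) / (m + 1) := by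
    rw [← sqrt_sq (abs_nonneg _), sq_abs, sqrt_eq_iff_mul_self_eq_of_pos (by positivity)]
    field_simp
    rw [sq_sqrt hN.le]
    linear_combination -ht
  rw [psi, hprod, sqrt_sq (by positivity), habs]
  field_simp
  rw [sq_sqrt hm]

lemma mem_Icc_of_sq_sub_le_sq {N t : ℝ} (hN : 0 ≤ N) (ht : (2 * t - N) ^ 2 ≤ N ^ 2) :
    t ∈ Set.Icc 0 N := by
  obtain ⟨h₁, h₂⟩ := abs_le_of_sq_le_sq' ht hN
  constructor <;> linarith

theorem psi_max_general (n : ℕ)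
    (ψ : ℝ → ℝ)
    (hψ : ∀ t, ψ t = (2 * Real.sqrt n / (n + 1)) * Real.sqrt (t * (n + 1 - t))
        + |1 - 2 * t / (n + 1)|)
    (tm tp : ℝ)
    (htm : tm = (n + 1) / 2 - Real.sqrt (n + 1) / 2)
    (htp : tp = (n + 1) / 2 + Real.sqrt (n + 1) / 2) :
    (∀ t ∈ Set.Icc (0 : ℝ) (n + 1), ψ t ≤ Real.sqrt (n + 1)) ∧
    tm ∈ Set.Icc (0 : ℝ) (n + 1) ∧ tp ∈ Set.Icc (0 : ℝ) (n + 1) ∧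
    ψ tm = Real.sqrt (n + 1) ∧ ψ tp = Real.sqrt (n + 1) := by
  have hψ' : ψ = psi n := funext hψ
  subst hψ' htm htp
  have hn0 : (0 : ℝ) ≤ n := n.cast_nonneg
  have hsq : √((n : ℝ) + 1) ^ 2 = n + 1 := sq_sqrt (by positivity)
  have htm_sq : (2 * ((n + 1) / 2 - √(n + 1) / 2) - (n + 1)) ^ 2 = (n : ℝ) + 1 := by
    linear_combination hsq
  have htp_sq : (2 * ((n + 1) / 2 + √(n + 1) / 2) - (n + 1)) ^ 2 = (n : ℝ) + 1 := by
    linear_combination hsq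
  have hle : (n : ℝ) + 1 ≤ (n + 1) ^ 2 := by nlinarith
  exact ⟨fun t ht => psi_le_sqrt hn0 ht,
    mem_Icc_of_sq_sub_le_sq (by positivity) (htm_sq.trans_le hle),
    mem_Icc_of_sq_sub_le_sq (by positivity) (htp_sq.trans_le hle),
    psi_eq_sqrt_of_sq_eq hn0 htm_sq, psi_eq_sqrt_of_sq_eq hn0 htp_sq⟩

theorem psi_max (n : ℕ) (hn : 1 ≤ n)
    (ψ : ℝ → ℝ)
    (hψ : ∀ t, ψ t = (2 * Real.sqrt n / (n + 1)) * Real.sqrt (t * (n + 1 - t))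
        + |1 - 2 * t / (n + 1)|)
    (tm tp : ℝ)
    (htm : tm = (n + 1) / 2 - Real.sqrt (n + 1) / 2)
    (htp : tp = (n + 1) / 2 + Real.sqrt (n + 1) / 2) :
    (∀ t ∈ Set.Icc (0 : ℝ) (n + 1), ψ t ≤ Real.sqrt (n + 1)) ∧
    tm ∈ Set.Icc (0 : ℝ) (n + 1) ∧ tp ∈ Set.Icc (0 : ℝ) (n + 1) ∧
    ψ tm = Real.sqrt (n + 1) ∧ ψ tp = Real.sqrt (n + 1) :=
  psi_max_general n ψ hψ tm tp htm htp
end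

section
/- For every integer n ≥ 1, the maximum over integers k with 1 ≤ k ≤ (n+1)/2 of ψ(k) = (2√n/(n+1))·√(k(n+1−k)) + 1 − 2k/(n+1) equals max{ψ(a), ψ(a+1)}, where a = ⌊(n+1)/2 − √(n+1)/2⌋. -/
/-!
For `0 ≤ t ≤ (n + 1) / 2` the absolute value opens up and `(n + 1) ψ(t) = 2√n √(t(n+1-t)) + (n+1-2t)`,
a concave function of `t`. With `u = n + 1 - 2t` one has `4t(n+1-t) = (n+1)² - u²`, so by Cauchy–Schwarz
`(n + 1) ψ(t) = √n √((n+1)² - u²) + u ≤ (n+1)^{3/2}`, with equality at `u = √(n+1)`, that is at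
`c = (n+1)/2 - √(n+1)/2`. A concave function increases up to its maximiser and decreases after it,
so among integers its maximum is taken at `⌊c⌋` or `⌊c⌋ + 1`.
-/

open Set

theorem ConcaveOn.sqrt {E : Type*} [AddCommMonoid E] [Module ℝ E] {s : Set E} {f : E → ℝ}
    (hf : ConcaveOn ℝ s f) (hf₀ : ∀ x ∈ s, 0 ≤ f x) : ConcaveOn ℝ s fun x ↦ √(f x) := by
  refine ⟨hf.1, fun x hx y hy a b ha hb hab ↦ ?_⟩
  calc a • √(f x) + b • √(f y) ≤ √(a • f x + b • f y) :=
        Real.strictConcaveOn_sqrt.concaveOn.2 (hf₀ x hx) (hf₀ y hy) ha hb hab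
    _ ≤ √(f (a • x + b • y)) := Real.sqrt_le_sqrt (hf.2 hx hy ha hb hab)

theorem concaveOn_mul_sub (m : ℝ) : ConcaveOn ℝ univ fun t : ℝ ↦ t * (m - t) := by
  refine ⟨convex_univ, fun x _ y _ a b ha hb hab ↦ ?_⟩
  simp only [smul_eq_mul]
  obtain rfl : b = 1 - a := by linarith
  nlinarith [mul_nonneg ha hb, sq_nonneg (x - y)]

theorem ConcaveOn.le_max_floor {s : Set ℝ} {f : ℝ → ℝ} {c : ℝ} (hf : ConcaveOn ℝ s f)
    (hc : c ∈ s) (hmax : IsMaxOn f s c) {k : ℤ} (hk : (k : ℝ) ∈ s) :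
    f k ≤ max (f ⌊c⌋) (f (⌊c⌋ + 1)) := by
  rcases le_or_gt k ⌊c⌋ with hk_le | hk_gt
  · have hmem : (⌊c⌋ : ℝ) ∈ Icc (k : ℝ) c := ⟨by exact_mod_cast hk_le, Int.floor_le c⟩
    calc f k = min (f k) (f c) := (min_eq_left (hmax hk)).symm
      _ ≤ f ⌊c⌋ := hf.min_le_of_mem_Icc hk hc hmem
      _ ≤ _ := le_max_left _ _
  · have hmem : (⌊c⌋ : ℝ) + 1 ∈ Icc c (k : ℝ) :=
      ⟨(Int.lt_floor_add_one c).le, by exact_mod_cast hk_gt⟩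
    calc f k = min (f c) (f k) := (min_eq_right (hmax hk)).symm
      _ ≤ f (⌊c⌋ + 1) := hf.min_le_of_mem_Icc hc hk hmem
      _ ≤ _ := le_max_right _ _

noncomputable def scaledPsi (n t : ℝ) : ℝ := 2 * √n * √(t * (n + 1 - t)) + (n + 1 - 2 * t)

theorem concaveOn_scaledPsi (n : ℝ) : ConcaveOn ℝ (Icc 0 (n + 1)) (scaledPsi n) := by
  have hs : Convex ℝ (Icc 0 (n + 1)) := convex_Icc 0 (n + 1)
  have hsqrt : ConcaveOn ℝ (Icc 0 (n + 1)) fun t ↦ √(t * (n + 1 - t)) :=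
    ((concaveOn_mul_sub (n + 1)).subset (subset_univ _) hs).sqrt
      fun t ht ↦ mul_nonneg ht.1 (sub_nonneg.2 ht.2)
  have haffine : ConcaveOn ℝ (Icc 0 (n + 1)) fun t ↦ n + 1 - 2 * t :=
    (concaveOn_const (n + 1) hs).sub ((convexOn_id hs).smul zero_le_two)
  exact (hsqrt.smul (by positivity : 0 ≤ 2 * √n)).add haffine

theorem scaledPsi_le {n t : ℝ} (hn : 0 ≤ n) (ht : 0 ≤ t * (n + 1 - t)) :
    scaledPsi n t ≤ (n + 1) * √(n + 1) := by
  set X := 2 * √(t * (n + 1 - t))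
  set u := n + 1 - 2 * t
  have hcircle : X ^ 2 + u ^ 2 = (n + 1) ^ 2 := by
    simp only [X, u, mul_pow, Real.sq_sqrt ht]; ring
  -- Cauchy–Schwarz for `(√n, 1)` and `(X, u)`
  have hCS : (√n * X + u) ^ 2 ≤ ((n + 1) * √(n + 1)) ^ 2 := by
    rw [mul_pow, Real.sq_sqrt (by linarith)]
    nlinarith [sq_nonneg (√n * u - X), Real.sq_sqrt hn]
  have : scaledPsi n t = √n * X + u := by simp only [scaledPsi, X, u]; ring
  rw [this]
  exact le_of_sq_le_sq hCS (by positivity)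

theorem scaledPsi_critical {n : ℝ} (hn : 0 ≤ n) :
    scaledPsi n ((n + 1) / 2 - √(n + 1) / 2) = (n + 1) * √(n + 1) := by
  have hm : √(n + 1) ^ 2 = n + 1 := Real.sq_sqrt (by linarith)
  have hprod : ((n + 1) / 2 - √(n + 1) / 2) * (n + 1 - ((n + 1) / 2 - √(n + 1) / 2)) =
      (√n * √(n + 1) / 2) ^ 2 := by
    rw [div_pow, mul_pow, Real.sq_sqrt hn, hm]; linear_combination (-1 / 4) * hm
  rw [scaledPsi, hprod, Real.sqrt_sq (by positivity)]
  linear_combination √(n + 1) * Real.sq_sqrt hn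

theorem isMaxOn_scaledPsi {n : ℝ} (hn : 0 ≤ n) :
    IsMaxOn (scaledPsi n) (Icc 0 (n + 1)) ((n + 1) / 2 - √(n + 1) / 2) := fun _ ht ↦ by
  show scaledPsi n _ ≤ scaledPsi n _
  rw [scaledPsi_critical hn]
  exact scaledPsi_le hn (mul_nonneg ht.1 (sub_nonneg.2 ht.2))

theorem critical_mem_Icc {n : ℝ} (hn : 0 ≤ n) :
    (n + 1) / 2 - √(n + 1) / 2 ∈ Icc 0 ((n + 1) / 2) :=
  ⟨by nlinarith [Real.sq_sqrt (by linarith : 0 ≤ n + 1), Real.sqrt_nonneg (n + 1)],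
    by linarith [Real.sqrt_nonneg (n + 1)]⟩

section Psi

variable {n : ℝ} {ψ : ℝ → ℝ}

theorem eqOn_psi (hn : 0 ≤ n)
    (hψ : ∀ t, ψ t = (2 * √n / (n + 1)) * √(t * (n + 1 - t)) + |1 - 2 * t / (n + 1)|) :
    EqOn (fun t ↦ (n + 1)⁻¹ * scaledPsi n t) ψ (Icc 0 ((n + 1) / 2)) := fun t ht ↦ by
  have : 2 * t / (n + 1) ≤ 1 := by rw [div_le_one (by positivity)]; linarith [ht.2]
  rw [hψ, abs_of_nonneg (by linarith)]
  unfold scaledPsi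
  field_simp

theorem concaveOn_psi (hn : 0 ≤ n)
    (hψ : ∀ t, ψ t = (2 * √n / (n + 1)) * √(t * (n + 1 - t)) + |1 - 2 * t / (n + 1)|) :
    ConcaveOn ℝ (Icc 0 ((n + 1) / 2)) ψ :=
  (((concaveOn_scaledPsi n).subset (Icc_subset_Icc_right (by linarith)) (convex_Icc _ _)).smul
    (by positivity)).congr (eqOn_psi hn hψ)

theorem isMaxOn_psi (hn : 0 ≤ n)
    (hψ : ∀ t, ψ t = (2 * √n / (n + 1)) * √(t * (n + 1 - t)) + |1 - 2 * t / (n + 1)|) :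
    IsMaxOn ψ (Icc 0 ((n + 1) / 2)) ((n + 1) / 2 - √(n + 1) / 2) := fun t ht ↦ by
  show ψ t ≤ ψ _
  rw [← eqOn_psi hn hψ ht, ← eqOn_psi hn hψ (critical_mem_Icc hn)]
  exact mul_le_mul_of_nonneg_left
    (isMaxOn_scaledPsi hn ⟨ht.1, ht.2.trans (by linarith)⟩) (by positivity)

theorem psi_zero_le_psi_one (hn : 1 ≤ n)
    (hψ : ∀ t, ψ t = (2 * √n / (n + 1)) * √(t * (n + 1 - t)) + |1 - 2 * t / (n + 1)|) :
    ψ 0 ≤ ψ 1 := by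
  have hn₀ : 0 ≤ n := by linarith
  rw [← eqOn_psi hn₀ hψ ⟨le_rfl, by positivity⟩,
    ← eqOn_psi hn₀ hψ ⟨zero_le_one, by linarith⟩]
  dsimp only
  gcongr
  simp only [scaledPsi, zero_mul, one_mul, add_sub_cancel_right, Real.sqrt_zero, mul_zero,
    mul_assoc, Real.mul_self_sqrt hn₀]
  linarith

end Psi

theorem max_over_integers (n : ℕ) (hn : 1 ≤ n)
    (ψ : ℝ → ℝ)
    (hψ : ∀ t, ψ t = (2 * Real.sqrt n / (n + 1)) * Real.sqrt (t * (n + 1 - t))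
        + |1 - 2 * t / (n + 1)|)
    (a : ℤ) (ha : a = ⌊((n : ℝ) + 1) / 2 - Real.sqrt (n + 1) / 2⌋) :
    IsGreatest {s : ℝ | ∃ k : ℤ, 1 ≤ k ∧ (k : ℝ) ≤ (n + 1) / 2 ∧ s = ψ k}
      (max (ψ a) (ψ (a + 1))) := by
  have hn₁ : (1 : ℝ) ≤ n := by exact_mod_cast hn
  have hn₀ : (0 : ℝ) ≤ n := by positivity
  have hc := critical_mem_Icc hn₀
  refine ⟨?_, ?_⟩
  · obtain rfl | ha₁ := (ha ▸ Int.floor_nonneg.2 hc.1 : 0 ≤ a).eq_or_lt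
    · refine ⟨1, le_rfl, by push_cast; linarith, ?_⟩
      push_cast
      rw [zero_add, max_eq_right (psi_zero_le_psi_one hn₁ hψ)]
    · have ha_le : (a : ℝ) + 1 ≤ (n + 1) / 2 := by
        have : (a : ℝ) ≤ (n + 1) / 2 - √(n + 1) / 2 := ha ▸ Int.floor_le _
        have : (1 : ℝ) ≤ a := by exact_mod_cast ha₁
        nlinarith [Real.sq_sqrt (by positivity : (0 : ℝ) ≤ n + 1), Real.sqrt_nonneg ((n : ℝ) + 1)]
      rcases max_choice (ψ a) (ψ (a + 1)) with h | h <;> rw [h]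
      · exact ⟨a, ha₁, by linarith, rfl⟩
      · exact ⟨a + 1, by omega, by push_cast; linarith, by push_cast; rfl⟩
  · rintro _ ⟨k, hk₁, hk, rfl⟩
    rw [ha]
    exact (concaveOn_psi hn₀ hψ).le_max_floor hc (isMaxOn_psi hn₀ hψ)
      ⟨by positivity, hk⟩
end

section
/- For every integer n ≥ 2, max{ψ(a), ψ(a+1)} > √n, where a = ⌊(n+1)/2 − √(n+1)/2⌋ and ψ(t) = (2√n/(n+1))·√(t(n+1−t)) + |1 − 2t/(n+1)|. -/
/-!
Put `N = n + 1`, `c = √n` (so `N = c² + 1`) and `u = 1 - 2t/N`. Since `t (N - t) = (N/2)² (1 - u²)`,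
`ψ t = c √(1 - u²) + |u|`, and for `u > 0` this exceeds `c` as soon as `(c² + 1) u < 2c`, i.e.
`0 < N - 2t < 2√n`. Because `N - 2a ≥ √N` and `N - 2(a + 1) < √N < 2√n`, one of `t = a`, `t = a + 1`
satisfies this window condition.
-/

open Real

lemma lt_mul_sqrt_one_sub_sq_add {c u : ℝ} (hu : 0 < u) (h : (c ^ 2 + 1) * u < 2 * c) :
    c < c * √(1 - u ^ 2) + u := by
  have hc : 0 < c := by nlinarith [sq_nonneg c]
  have hsq : (c - u) ^ 2 < c ^ 2 * (1 - u ^ 2) := by nlinarith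
  have hlt : c - u < √(c ^ 2 * (1 - u ^ 2)) := lt_sqrt_of_sq_lt hsq
  rw [sqrt_mul (sq_nonneg c), sqrt_sq hc.le] at hlt
  linarith

lemma mul_sqrt_mul_sub_div (c t : ℝ) {N : ℝ} (hN : 0 < N) :
    2 * c / N * √(t * (N - t)) = c * √(1 - (1 - 2 * t / N) ^ 2) := by
  have hprod : t * (N - t) = (N / 2) ^ 2 * (1 - (1 - 2 * t / N) ^ 2) := by
    field_simp
    ring
  rw [hprod, sqrt_mul (sq_nonneg _), sqrt_sq (by positivity)]
  field_simp

lemma lt_psi_of_mem_Ioo {c t : ℝ} (ht : c ^ 2 + 1 - 2 * t ∈ Set.Ioo 0 (2 * c)) :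
    c < 2 * c / (c ^ 2 + 1) * √(t * (c ^ 2 + 1 - t)) + |1 - 2 * t / (c ^ 2 + 1)| := by
  have hN : 0 < c ^ 2 + 1 := by positivity
  have hu : 1 - 2 * t / (c ^ 2 + 1) = (c ^ 2 + 1 - 2 * t) / (c ^ 2 + 1) := by field_simp
  have hu_pos : 0 < 1 - 2 * t / (c ^ 2 + 1) := by rw [hu]; exact div_pos ht.1 hN
  rw [mul_sqrt_mul_sub_div c t hN, abs_of_pos hu_pos]
  refine lt_mul_sqrt_one_sub_sq_add hu_pos ?_
  rw [hu, mul_div_cancel₀ _ hN.ne']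
  exact ht.2

lemma sub_two_mul_floor_mem_Ioo {N s c : ℝ} (hs : 0 < s) (hsc : s < 2 * c) (hc : 1 < c) :
    N - 2 * ⌊N / 2 - s / 2⌋ ∈ Set.Ioo 0 (2 * c) ∨
      N - 2 * (⌊N / 2 - s / 2⌋ + 1) ∈ Set.Ioo 0 (2 * c) := by
  have hle := Int.floor_le (N / 2 - s / 2)
  have hlt := Int.lt_floor_add_one (N / 2 - s / 2)
  by_cases hwin : N - 2 * ⌊N / 2 - s / 2⌋ < 2 * c
  · exact .inl ⟨by linarith, hwin⟩
  · exact .inr ⟨by linarith, by linarith⟩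

theorem max_psi_gt_sqrt (n : ℕ) (hn : 2 ≤ n)
    (ψ : ℝ → ℝ)
    (hψ : ∀ t, ψ t = (2 * Real.sqrt n / (n + 1)) * Real.sqrt (t * (n + 1 - t))
        + |1 - 2 * t / (n + 1)|)
    (a : ℤ) (ha : a = ⌊((n : ℝ) + 1) / 2 - Real.sqrt (n + 1) / 2⌋) :
    Real.sqrt n < max (ψ a) (ψ (a + 1)) := by
  have hn' : (2 : ℝ) ≤ n := by exact_mod_cast hn
  have hN : (n : ℝ) + 1 = √n ^ 2 + 1 := by rw [sq_sqrt n.cast_nonneg]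
  have hc : 1 < √n := by rw [lt_sqrt zero_le_one]; linarith
  have hsc : √(n + 1) < 2 * √n := by
    rw [sqrt_lt' (by positivity), mul_pow, sq_sqrt n.cast_nonneg]
    linarith
  have hψ' : ∀ t, ψ t = 2 * √n / (√n ^ 2 + 1) * √(t * (√n ^ 2 + 1 - t))
      + |1 - 2 * t / (√n ^ 2 + 1)| := fun t => by rw [hψ, hN]
  rcases sub_two_mul_floor_mem_Ioo (N := n + 1) (sqrt_pos.2 (by positivity)) hsc hc with h | h <;>
    rw [← ha, hN] at h
  · exact lt_max_of_lt_left (hψ' _ ▸ lt_psi_of_mem_Ioo h)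
  · exact lt_max_of_lt_right (hψ' _ ▸ lt_psi_of_mem_Ioo h)
end

section
/- Let P : C(B) → Π₁(ℝⁿ) be the interpolation projector with nodes at the vertices x⁽¹⁾,…,x⁽ⁿ⁺¹⁾ of a nondegenerate simplex S ⊆ B, where B = B(x⁽⁰⁾; R) is a Euclidean ball. Then ‖P‖_B = max over sign choices f_j ∈ {−1, 1} of [ R·(Σᵢ₌₁ⁿ (Σⱼ₌₁ⁿ⁺¹ f_j l_{ij})²)^{1/2} + |Σⱼ₌₁ⁿ⁺¹ f_j λ_j(x⁽⁰⁾)| ], where λ_j(x) = l_{1j}x₁ + … + l_{nj}x_n + l_{n+1,j} are the basic Lagrange polynomials of S. -/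
/-!
Writing `|t| = max (t, -t)` termwise, `Σⱼ |λⱼ(y)| = max_f Σⱼ fⱼ λⱼ(y)` over sign vectors `f`, so
`‖P‖_B` is the maximum over `f` of the maximum over `B` of the affine function
`Σⱼ fⱼ λⱼ(y) = ⟪v_f, y - x⁰⟫ + Σⱼ fⱼ λⱼ(x⁰)` with `(v_f)ᵢ = Σⱼ fⱼ lᵢⱼ`. By Cauchy–Schwarz the
absolute value of such a function on the ball is at most `R‖v_f‖ + |Σⱼ fⱼ λⱼ(x⁰)|`, with equality
at the point `x⁰ ± (R / ‖v_f‖) v_f`.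
-/

open scoped RealInnerProductSpace
open Metric

section AffineOnBall

variable {E : Type*} [NormedAddCommGroup E] [InnerProductSpace ℝ E]

theorem abs_inner_sub_add_le {x₀ y : E} {R : ℝ} (hy : y ∈ closedBall x₀ R) (v : E) (c : ℝ) :
    |⟪v, y - x₀⟫ + c| ≤ R * ‖v‖ + |c| := by
  have hyR : ‖y - x₀‖ ≤ R := by rwa [← dist_eq_norm]
  calc |⟪v, y - x₀⟫ + c| ≤ |⟪v, y - x₀⟫| + |c| := abs_add_le _ _
    _ ≤ ‖v‖ * ‖y - x₀‖ + |c| := by gcongr; exact abs_real_inner_le_norm _ _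
    _ ≤ R * ‖v‖ + |c| := by rw [mul_comm]; gcongr

theorem exists_mem_closedBall_inner_sub_eq (x₀ v : E) {R : ℝ} (hR : 0 ≤ R) :
    ∃ y ∈ closedBall x₀ R, ⟪v, y - x₀⟫ = R * ‖v‖ := by
  rcases eq_or_ne v 0 with rfl | hv
  · exact ⟨x₀, mem_closedBall_self hR, by simp⟩
  have hv' : ‖v‖ ≠ 0 := norm_ne_zero_iff.mpr hv
  refine ⟨x₀ + (R / ‖v‖) • v, ?_, ?_⟩
  · rw [mem_closedBall, dist_eq_norm, add_sub_cancel_left, norm_smul, Real.norm_eq_abs,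
      abs_of_nonneg (by positivity), div_mul_cancel₀ _ hv']
  · rw [add_sub_cancel_left, real_inner_smul_right, real_inner_self_eq_norm_sq]
    field_simp

theorem exists_mem_closedBall_abs_inner_sub_add_eq (x₀ v : E) (c : ℝ) {R : ℝ} (hR : 0 ≤ R) :
    ∃ y ∈ closedBall x₀ R, |⟪v, y - x₀⟫ + c| = R * ‖v‖ + |c| := by
  rcases le_total 0 c with hc | hc
  · obtain ⟨y, hy, hyv⟩ := exists_mem_closedBall_inner_sub_eq x₀ v hR
    exact ⟨y, hy, by rw [hyv, abs_of_nonneg hc, abs_of_nonneg (by positivity)]⟩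
  · obtain ⟨y, hy, hyv⟩ := exists_mem_closedBall_inner_sub_eq x₀ (-v) hR
    refine ⟨y, hy, ?_⟩
    rw [inner_neg_left, norm_neg] at hyv
    rw [← abs_neg, neg_add, hyv, abs_of_nonpos hc, abs_of_nonneg (by nlinarith [norm_nonneg v])]

end AffineOnBall

section SignVectors

variable {ι : Type*} [Fintype ι]

theorem abs_sum_mul_le_sum_abs {f : ι → ℝ} (hf : ∀ j, |f j| ≤ 1) (a : ι → ℝ) :
    |∑ j, f j * a j| ≤ ∑ j, |a j| :=
  (Finset.abs_sum_le_sum_abs _ _).trans <| Finset.sum_le_sum fun j _ => by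
    rw [abs_mul]; exact mul_le_of_le_one_left (abs_nonneg _) (hf j)

theorem exists_sign_sum_mul_eq_sum_abs (a : ι → ℝ) :
    ∃ f : ι → ℝ, (∀ j, f j = 1 ∨ f j = -1) ∧ ∑ j, f j * a j = ∑ j, |a j| := by
  refine ⟨fun j => if 0 ≤ a j then 1 else -1, fun j => by dsimp only; split_ifs <;> simp, ?_⟩
  refine Finset.sum_congr rfl fun j _ => ?_
  dsimp only
  split_ifs with h
  · rw [one_mul, abs_of_nonneg h]
  · rw [abs_of_neg (not_le.mp h)]; ring

end SignVectors

section AffineFunctions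

variable {ι κ : Type*} [Fintype ι] [Fintype κ]

theorem EuclideanSpace.real_inner_toLp_eq (w : κ → ℝ) (z : EuclideanSpace ℝ κ) :
    ⟪WithLp.toLp 2 w, z⟫ = ∑ i, w i * z i := by
  simp [PiLp.inner_apply, mul_comm]

theorem EuclideanSpace.norm_toLp_eq (w : κ → ℝ) :
    ‖WithLp.toLp 2 w‖ = √(∑ i, w i ^ 2) := by
  rw [← Real.sqrt_sq (norm_nonneg _), EuclideanSpace.real_norm_sq_eq]

theorem sum_mul_eq_inner_add {a : κ → ι → ℝ} {b : ι → ℝ}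
    {lam : ι → EuclideanSpace ℝ κ → ℝ} (hlam : ∀ j y, lam j y = (∑ i, a i j * y i) + b j)
    (f : ι → ℝ) (y : EuclideanSpace ℝ κ) :
    ∑ j, f j * lam j y = ⟪WithLp.toLp 2 fun i => ∑ j, f j * a i j, y⟫ + ∑ j, f j * b j := by
  simp only [EuclideanSpace.real_inner_toLp_eq, hlam, mul_add, Finset.sum_add_distrib,
    Finset.mul_sum, Finset.sum_mul]
  rw [Finset.sum_comm]
  simp only [mul_assoc]

theorem sum_mul_eq_inner_sub_add {a : κ → ι → ℝ} {b : ι → ℝ}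
    {lam : ι → EuclideanSpace ℝ κ → ℝ} (hlam : ∀ j y, lam j y = (∑ i, a i j * y i) + b j)
    (f : ι → ℝ) (x₀ y : EuclideanSpace ℝ κ) :
    ∑ j, f j * lam j y =
      ⟪WithLp.toLp 2 fun i => ∑ j, f j * a i j, y - x₀⟫ + ∑ j, f j * lam j x₀ := by
  rw [inner_sub_right, sum_mul_eq_inner_add hlam, sum_mul_eq_inner_add hlam]
  ring

end AffineFunctions

theorem projector_norm_formula_general (n : ℕ)
    (x0 : EuclideanSpace ℝ (Fin n)) (R : ℝ) (hR : 0 < R)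
    (L : Matrix (Fin (n + 1)) (Fin (n + 1)) ℝ)
    (lam : Fin (n + 1) → EuclideanSpace ℝ (Fin n) → ℝ)
    (hlam : ∀ j y, lam j y = (∑ i : Fin n, L i.castSucc j * y i) + L (Fin.last n) j) :
    sSup {s : ℝ | ∃ y ∈ Metric.closedBall x0 R, s = ∑ j, |lam j y|} =
    sSup {s : ℝ | ∃ f : Fin (n + 1) → ℝ, (∀ j, f j = 1 ∨ f j = -1) ∧
      s = R * Real.sqrt (∑ i : Fin n, (∑ j, f j * L i.castSucc j) ^ 2)
        + |∑ j, f j * lam j x0|} := by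
  set v : (Fin (n + 1) → ℝ) → EuclideanSpace ℝ (Fin n) :=
    fun f => WithLp.toLp 2 fun i => ∑ j, f j * L i.castSucc j
  have hsum (f : Fin (n + 1) → ℝ) (y : EuclideanSpace ℝ (Fin n)) :
      ∑ j, f j * lam j y = ⟪v f, y - x0⟫ + ∑ j, f j * lam j x0 :=
    sum_mul_eq_inner_sub_add hlam f x0 y
  have hnorm (f : Fin (n + 1) → ℝ) :
      √(∑ i : Fin n, (∑ j, f j * L i.castSucc j) ^ 2) = ‖v f‖ :=
    (EuclideanSpace.norm_toLp_eq _).symm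
  apply csSup_eq_csSup_of_forall_exists_le
  · rintro _ ⟨y, hy, rfl⟩
    obtain ⟨f, hf, hfy⟩ := exists_sign_sum_mul_eq_sum_abs fun j => lam j y
    refine ⟨_, ⟨f, hf, rfl⟩, ?_⟩
    rw [hnorm, ← hfy, hsum]
    exact (le_abs_self _).trans (abs_inner_sub_add_le hy _ _)
  · rintro _ ⟨f, hf, rfl⟩
    obtain ⟨y, hy, hyf⟩ :=
      exists_mem_closedBall_abs_inner_sub_add_eq x0 (v f) (∑ j, f j * lam j x0) hR.le
    refine ⟨_, ⟨y, hy, rfl⟩, ?_⟩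
    rw [hnorm, ← hyf, ← hsum]
    exact abs_sum_mul_le_sum_abs (fun j => by rcases hf j with h | h <;> simp [h]) _

/-- Theorem 1: the norm of the interpolation projector on a Euclidean ball,
`‖P‖_B = max_{x∈B} Σ_j |λ_j(x)|`, equals
`max_{f_j = ±1} [ R·(Σ_i (Σ_j f_j l_{ij})²)^{1/2} + |Σ_j f_j λ_j(x⁰)| ]`. -/
theorem projector_norm_formula (n : ℕ) (hn : 1 ≤ n)
    (x0 : EuclideanSpace ℝ (Fin n)) (R : ℝ) (hR : 0 < R)
    (x : Fin (n + 1) → EuclideanSpace ℝ (Fin n))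
    (hx : ∀ j, x j ∈ Metric.closedBall x0 R)
    (A : Matrix (Fin (n + 1)) (Fin (n + 1)) ℝ)
    (hA : ∀ j, (∀ i : Fin n, A j i.castSucc = x j i) ∧ A j (Fin.last n) = 1)
    (hdet : IsUnit A.det)
    (L : Matrix (Fin (n + 1)) (Fin (n + 1)) ℝ) (hL : L = A⁻¹)
    (lam : Fin (n + 1) → EuclideanSpace ℝ (Fin n) → ℝ)
    (hlam : ∀ j y, lam j y = (∑ i : Fin n, L i.castSucc j * y i) + L (Fin.last n) j) :
    sSup {s : ℝ | ∃ y ∈ Metric.closedBall x0 R, s = ∑ j, |lam j y|} =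
    sSup {s : ℝ | ∃ f : Fin (n + 1) → ℝ, (∀ j, f j = 1 ∨ f j = -1) ∧
      s = R * Real.sqrt (∑ i : Fin n, (∑ j, f j * L i.castSucc j) ^ 2)
        + |∑ j, f j * lam j x0|} :=
  projector_norm_formula_general n x0 R hR L lam hlam
end
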